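/- Let d2, a2, q > 0 and x2 > 0. If v : ℝ → ℝ is twice continuously differentiable and satisfies d2·v''(x) − a2·v'(x) − q·v(x) = 0 for all x ∈ [0, x2], together with the boundary conditions d2·v'(0) − a2·v(0) = 0 and d2·v'(x2) − a2·v(x2) = 0, then v(x) = 0 for all x ∈ [0, x2]. Consequently, the downstream toxicant boundary value problem has at most one solution on [0, x2]. -/

import Mathlib

/-- `w` is a solution of the downstream toxicant boundary value problem with
parameters `d2, a2, h, q` on the interval `[0, x2]`. -/
def IsDownstreamSolution (d2 a2 h q x2 : ℝ) (w : ℝ → ℝ) : Prop :=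
  ContDiff ℝ 2 w ∧
  (∀ x ∈ Set.Icc (0 : ℝ) x2,
      d2 * deriv (deriv w) x - a2 * deriv w x + h - q * w x = 0) ∧
  d2 * deriv w 0 - a2 * w 0 = 0 ∧ d2 * deriv w x2 - a2 * w x2 = 0


theorem homog_aux (d2 a2 q x2 : ℝ)
    (hd2 : 0 < d2) (ha2 : 0 < a2) (hq : 0 < q) (hx2 : 0 < x2)
    (v : ℝ → ℝ) (hv : ContDiff ℝ 2 v)
    (hode : ∀ x ∈ Set.Icc (0 : ℝ) x2,
        d2 * deriv (deriv v) x - a2 * deriv v x - q * v x = 0)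
    (hb0 : d2 * deriv v 0 - a2 * v 0 = 0)
    (hb2 : d2 * deriv v x2 - a2 * v x2 = 0) :
    ∀ x ∈ Set.Icc (0 : ℝ) x2, v x = 0 := by
  have hv1 : Differentiable ℝ v := hv.differentiable two_ne_zero
  have hvd : ContDiff ℝ 1 (deriv v) := by
    have h2 : ContDiff ℝ ((1 : ℕ) + 1) v := by exact_mod_cast hv
    exact (contDiff_succ_iff_deriv.mp h2).2.2
  have hu : Differentiable ℝ (deriv v) := hvd.differentiable one_ne_zero
  set μ : ℝ := a2 / d2 with hμ
  set G : ℝ → ℝ := fun x =>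
    Real.exp (-μ * x) * ((d2 * deriv v x - a2 * v x) * v x) with hGdef
  set D : ℝ → ℝ := fun x =>
    Real.exp (-μ * x) * (q * v x ^ 2 + (d2 * deriv v x - a2 * v x) ^ 2 / d2) with hDdef
  have hGderiv : ∀ x ∈ Set.Icc (0 : ℝ) x2, HasDerivAt G (D x) x := by
    intro x hx
    have he : HasDerivAt (fun y => Real.exp (-μ * y)) (Real.exp (-μ * x) * (-μ)) x := by
      have h1 : HasDerivAt (fun y : ℝ => -μ * y) (-μ) x := by
        simpa using (hasDerivAt_id x).const_mul (-μ)
      simpa using h1.exp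
    have hA : HasDerivAt (fun y => d2 * deriv v y - a2 * v y)
        (d2 * deriv (deriv v) x - a2 * deriv v x) x :=
      ((hu x).hasDerivAt.const_mul d2).sub ((hv1 x).hasDerivAt.const_mul a2)
    have hAv : HasDerivAt (fun y => (d2 * deriv v y - a2 * v y) * v y)
        ((d2 * deriv (deriv v) x - a2 * deriv v x) * v x
          + (d2 * deriv v x - a2 * v x) * deriv v x) x :=
      hA.mul (hv1 x).hasDerivAt
    have hG : HasDerivAt G _ x := he.mul hAv
    have hodeq : d2 * deriv (deriv v) x - a2 * deriv v x = q * v x := by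
      have := hode x hx; linarith
    convert hG using 1
    rw [hodeq, hDdef]
    have hd2' : d2 ≠ 0 := ne_of_gt hd2
    rw [hμ]
    field_simp
    ring
  have hGcont : Continuous G := by
    fun_prop
  have hmono : MonotoneOn G (Set.Icc 0 x2) := by
    apply monotoneOn_of_deriv_nonneg (convex_Icc 0 x2) hGcont.continuousOn
    · intro x hx
      rw [interior_Icc] at hx
      exact (hGderiv x (Set.mem_Icc_of_Ioo hx)).differentiableAt.differentiableWithinAt
    · intro x hx
      rw [interior_Icc] at hx
      rw [(hGderiv x (Set.mem_Icc_of_Ioo hx)).deriv]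
      have : 0 ≤ q * v x ^ 2 + (d2 * deriv v x - a2 * v x) ^ 2 / d2 := by positivity
      positivity
  have hG0 : G 0 = 0 := by simp [hGdef, hb0]
  have hGx2 : G x2 = 0 := by simp [hGdef, hb2]
  have hGzero : ∀ x ∈ Set.Icc (0 : ℝ) x2, G x = 0 := by
    intro x hx
    have h1 := hmono (Set.left_mem_Icc.mpr hx2.le) hx hx.1
    have h2 := hmono hx (Set.right_mem_Icc.mpr hx2.le) hx.2
    rw [hG0] at h1; rw [hGx2] at h2; linarith
  have hvIoo : ∀ x ∈ Set.Ioo (0 : ℝ) x2, v x = 0 := by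
    intro x hx
    have hnhds : Set.Icc (0 : ℝ) x2 ∈ nhds x :=
      Filter.mem_of_superset (isOpen_Ioo.mem_nhds hx) Set.Ioo_subset_Icc_self
    have hev : G =ᶠ[nhds x] (fun _ => 0) :=
      Filter.eventually_of_mem hnhds hGzero
    have h0 : HasDerivAt G 0 x :=
      (hasDerivAt_const x (0 : ℝ)).congr_of_eventuallyEq hev
    have hD0 : D x = 0 :=
      (hGderiv x (Set.mem_Icc_of_Ioo hx)).unique h0
    rw [hDdef] at hD0
    have hexp : Real.exp (-μ * x) ≠ 0 := Real.exp_ne_zero _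
    have hsum : q * v x ^ 2 + (d2 * deriv v x - a2 * v x) ^ 2 / d2 = 0 := by
      rcases mul_eq_zero.mp hD0 with h | h
      · exact absurd h hexp
      · exact h
    have h1 : 0 ≤ q * v x ^ 2 := by positivity
    have h2 : 0 ≤ (d2 * deriv v x - a2 * v x) ^ 2 / d2 := by positivity
    have hqv : q * v x ^ 2 = 0 := by linarith
    have := mul_eq_zero.mp hqv
    rcases this with h | h
    · exact absurd h (ne_of_gt hq)
    · exact pow_eq_zero_iff (n := 2) (by norm_num) |>.mp h
  have hEq : Set.EqOn v (fun _ => 0) (Set.Icc 0 x2) := by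
    have hEqIoo : Set.EqOn v (fun _ => 0) (Set.Ioo 0 x2) := hvIoo
    have := hEqIoo.closure hv1.continuous continuous_const
    rwa [closure_Ioo (ne_of_lt hx2)] at this
  exact hEq

/-- the homogeneous downstream problem has only the trivial
solution; consequently the downstream toxicant boundary value problem has at
most one solution on `[0, x2]`. -/
theorem downstream_uniqueness
    (d2 a2 q x2 : ℝ)
    (hd2 : 0 < d2) (ha2 : 0 < a2) (hq : 0 < q) (hx2 : 0 < x2) :
    (∀ v : ℝ → ℝ, ContDiff ℝ 2 v →
      (∀ x ∈ Set.Icc (0 : ℝ) x2,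
          d2 * deriv (deriv v) x - a2 * deriv v x - q * v x = 0) →
      d2 * deriv v 0 - a2 * v 0 = 0 → d2 * deriv v x2 - a2 * v x2 = 0 →
      ∀ x ∈ Set.Icc (0 : ℝ) x2, v x = 0) ∧
    (∀ h : ℝ, 0 < h → ∀ w1 w2 : ℝ → ℝ,
      IsDownstreamSolution d2 a2 h q x2 w1 →
      IsDownstreamSolution d2 a2 h q x2 w2 →
      ∀ x ∈ Set.Icc (0 : ℝ) x2, w1 x = w2 x) := by
  constructor
  · exact fun v hv hode hb0 hb2 => homog_aux d2 a2 q x2 hd2 ha2 hq hx2 v hv hode hb0 hb2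
  · intro h hh w1 w2 hw1 hw2 x hx
    obtain ⟨hc1, hode1, hb01, hb21⟩ := hw1
    obtain ⟨hc2, hode2, hb02, hb22⟩ := hw2
    set v : ℝ → ℝ := fun y => w1 y - w2 y with hvdef
    have hd1 : Differentiable ℝ w1 := hc1.differentiable two_ne_zero
    have hd2' : Differentiable ℝ w2 := hc2.differentiable two_ne_zero
    have hdd1 : Differentiable ℝ (deriv w1) := by
      have h2 : ContDiff ℝ ((1 : ℕ) + 1) w1 := by exact_mod_cast hc1
      exact ((contDiff_succ_iff_deriv.mp h2).2.2).differentiable (by simp)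
    have hdd2 : Differentiable ℝ (deriv w2) := by
      have h2 : ContDiff ℝ ((1 : ℕ) + 1) w2 := by exact_mod_cast hc2
      exact ((contDiff_succ_iff_deriv.mp h2).2.2).differentiable (by simp)
    have hderiv : deriv v = fun y => deriv w1 y - deriv w2 y := by
      funext y
      exact deriv_sub (hd1 y) (hd2' y)
    have hderiv2 : ∀ y, deriv (deriv v) y = deriv (deriv w1) y - deriv (deriv w2) y := by
      intro y
      rw [hderiv]
      exact deriv_sub (hdd1 y) (hdd2 y)
    have hcv : ContDiff ℝ 2 v := hc1.sub hc2
    have hodev : ∀ y ∈ Set.Icc (0 : ℝ) x2,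
        d2 * deriv (deriv v) y - a2 * deriv v y - q * v y = 0 := by
      intro y hy
      have e1 := hode1 y hy
      have e2 := hode2 y hy
      rw [hderiv2 y, hderiv, hvdef]
      simp only
      linarith
    have hb0v : d2 * deriv v 0 - a2 * v 0 = 0 := by
      rw [hderiv, hvdef]; simp only; linarith
    have hb2v : d2 * deriv v x2 - a2 * v x2 = 0 := by
      rw [hderiv, hvdef]; simp only; linarith
    have := homog_aux d2 a2 q x2 hd2 ha2 hq hx2 v hcv hodev hb0v hb2v x hx
    have : w1 x - w2 x = 0 := this
    linarith
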